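/- Let m ≥ 1 and let w_1, …, w_m be freely reduced words in the letters A ∪ A^{-1} such that for each j the Whitehead graph Γ_A(w_j) has a cut vertex (equivalently, |w_j|_{g+1}^{simple} = 0). Then the unique reduced word w representing the product w_1 w_2 ⋯ w_m in the free group F_g satisfies |w|_{g+1}^{simple} ≤ m − 1. -/

import Mathlib

/-- A letter of the alphabet `A ∪ A⁻¹`: a generator index together with a sign. -/
abbrev Letter (g : ℕ) := Fin g × Bool

/-- The formal inverse of a letter. -/
def Letter.inv {g : ℕ} (a : Letter g) : Letter g := (a.1, !a.2)

/-- A word is (freely) reduced if it equals its free reduction. -/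
def IsReducedWord {g : ℕ} (w : List (Letter g)) : Prop :=
  FreeGroup.reduce w = w

/-- The Whitehead graph of a word `x`: vertices are the letters `A ∪ A⁻¹`, and each
pair of consecutive letters `a b` occurring in `x` contributes an edge from `a` to `b⁻¹`. -/
def whiteheadGraph (g : ℕ) (x : List (Letter g)) : SimpleGraph (Letter g) where
  Adj u v := u ≠ v ∧ ([u, Letter.inv v] <:+: x ∨ [v, Letter.inv u] <:+: x)
  symm := by
    constructor
    intro u v h
    exact ⟨Ne.symm h.1, h.2.symm⟩
  loopless := by
    constructor
    intro u h
    exact h.1 rfl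

/-- A graph has a cut vertex if it is disconnected, or some vertex can be removed to
disconnect it. -/
def HasCutVertex {V : Type*} (G : SimpleGraph V) : Prop :=
  ¬ G.Connected ∨ ∃ v : V, ¬ (G.induce {u | u ≠ v}).Connected

/-- The simple `(g+1)`-length of a reduced word `w`: it is `0` if the Whitehead graph of
`w` has a cut vertex, and otherwise the greatest `t` such that `w` is a concatenation of
`t` subwords each of whose Whitehead graphs has no cut vertex. -/
noncomputable def simpleLength (g : ℕ) (w : List (Letter g)) : ℕ :=
  letI := Classical.propDecidable (HasCutVertex (whiteheadGraph g w))
  if HasCutVertex (whiteheadGraph g w) then 0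
  else sSup {t : ℕ | ∃ ws : List (List (Letter g)),
    ws.length = t ∧ ws.flatten = w ∧
    ∀ u ∈ ws, ¬ HasCutVertex (whiteheadGraph g u)}

/-! Since the `w_i` are reduced, free reduction of `w_1 ⋯ w_m` only cancels letters across the
junctions, so the reduced word is `u_1 ⋯ u_m` with each `u_i` a subword of `w_i`. Whitehead graphs
grow with the word while having a cut vertex passes to subgraphs, so every subword of a `u_i` has
a cut vertex. Hence each piece of a decomposition into subwords without cut vertex is nonempty and
lies inside no single `u_i`: it straddles one of the `m - 1` junctions, and distinct pieces
straddle distinct junctions. -/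

namespace List

theorem Forall₂.exists_mem_of_mem {α β : Type*} {R : α → β → Prop} {l₁ : List α} {l₂ : List β}
    (h : Forall₂ R l₁ l₂) {a : α} (ha : a ∈ l₁) : ∃ b ∈ l₂, R a b := by
  induction h with
  | nil => exact absurd ha not_mem_nil
  | cons hab _ ih =>
    rcases mem_cons.1 ha with rfl | ha
    · exact ⟨_, mem_cons_self, hab⟩
    · obtain ⟨b, hb, hR⟩ := ih ha
      exact ⟨b, mem_cons_of_mem _ hb, hR⟩

variable {α : Type*}

theorem exists_forall₂_infix_flatten_eq_of_prefix {us ws : List (List α)}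
    (h : Forall₂ (· <:+: ·) us ws) {p : List α} (hp : p <+: us.flatten) :
    ∃ ps, Forall₂ (· <:+: ·) ps ws ∧ ps.flatten = p := by
  induction h generalizing p with
  | nil => exact ⟨[], .nil, (prefix_nil.1 hp).symm⟩
  | @cons u w us ws huw _ ih =>
    obtain ⟨q, hq⟩ := hp
    rw [flatten_cons] at hq
    rcases append_eq_append_iff.1 hq with ⟨c, rfl, -⟩ | ⟨c, rfl, hc⟩
    · refine ⟨p :: ws.map fun _ => [], .cons ((prefix_append p c).isInfix.trans huw) ?_, by simp⟩
      exact forall₂_map_left_iff.2 (forall₂_same.2 fun _ _ => nil_infix)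
    · obtain ⟨ps, hps, rfl⟩ := ih ⟨q, hc.symm⟩
      exact ⟨u :: ps, .cons huw hps, flatten_cons⟩

/-- `r` is the overhang of a piece straddling an earlier junction; it makes the induction go. -/
theorem length_le_of_append_flatten_eq {us : List (List α)} :
    ∀ {r : List α} {zs : List (List α)}, r ++ zs.flatten = us.flatten →
      (∀ z ∈ zs, z ≠ []) → (∀ z ∈ zs, ∀ u ∈ us, ¬ z <:+: u) → zs.length ≤ us.length - 1 := by
  induction us with
  | nil =>
    intro r zs h hne _
    rcases zs with _ | ⟨z, zs⟩
    · exact Nat.zero_le _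
    · simp only [flatten_nil, append_eq_nil_iff, flatten_eq_nil_iff] at h
      exact absurd (h.2 z mem_cons_self) (hne z mem_cons_self)
  | cons u us ih =>
    intro r zs h hne hinf
    rw [flatten_cons] at h
    rcases append_eq_append_iff.1 h with ⟨s, rfl, hs⟩ | ⟨c, rfl, hc⟩
    · rcases zs with _ | ⟨z, zs⟩
      · exact Nat.zero_le _
      have hsu : s <:+: r ++ s := (suffix_append r s).isInfix
      rw [flatten_cons] at hs
      rcases append_eq_append_iff.1 hs with ⟨b, rfl, -⟩ | ⟨c, rfl, hc⟩
      · exact absurd ((prefix_append z b).isInfix.trans hsu)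
          (hinf z mem_cons_self _ mem_cons_self)
      rcases c with _ | ⟨_, c⟩
      · exact absurd (by simpa using hsu) (hinf _ mem_cons_self _ mem_cons_self)
      have hus : 0 < us.length := length_pos_iff.2 (by rintro rfl; simp at hc)
      have := ih hc.symm (fun z hz => hne z (mem_cons_of_mem _ hz))
        (fun z hz v hv => hinf z (mem_cons_of_mem _ hz) v (mem_cons_of_mem _ hv))
      simp only [length_cons]
      omega
    · have := ih hc.symm hne fun z hz v hv => hinf z hz v (mem_cons_of_mem _ hv)
      simp only [length_cons]
      omega

end List

namespace FreeGroup

open List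

variable {α : Type*} [DecidableEq α]

theorem IsReduced.exists_reduce_append_eq {x y : List (α × Bool)} (hx : IsReduced x)
    (hy : IsReduced y) : ∃ x' y', x' <+: x ∧ y' <:+ y ∧ reduce (x ++ y) = x' ++ y' := by
  induction x using List.reverseRecOn generalizing y with
  | nil => exact ⟨[], y, nil_prefix, suffix_refl y, hy.reduce_eq⟩
  | append_singleton x a ih =>
    rcases y with _ | ⟨b, y⟩
    · exact ⟨x ++ [a], [], prefix_refl _, nil_suffix, by simpa using hx.reduce_eq⟩
    by_cases hab : a.1 = b.1 → a.2 = b.2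
    · have hxy : IsReduced (x ++ [a] ++ b :: y) :=
        hx.append_overlap (isReduced_cons_cons.2 ⟨hab, hy⟩) (cons_ne_nil a [])
      exact ⟨x ++ [a], b :: y, prefix_refl _, suffix_refl _, hxy.reduce_eq⟩
    · obtain ⟨h₁, h₂⟩ := Classical.not_imp.1 hab
      obtain rfl : b = (a.1, !a.2) := Prod.ext h₁.symm (Bool.eq_not.2 (Ne.symm h₂))
      obtain ⟨x', y', hx', hy', he⟩ :=
        ih (hx.infix (prefix_append x [a]).isInfix) (hy.infix (suffix_cons _ y).isInfix)
      refine ⟨x', y', hx'.trans (prefix_append x [a]), hy'.trans (suffix_cons _ y), ?_⟩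
      rw [← he, append_assoc, singleton_append]
      exact reduce.Step.eq Red.Step.not

theorem exists_forall₂_infix_reduce_flatten_eq {ws : List (List (α × Bool))}
    (hws : ∀ w ∈ ws, IsReduced w) :
    ∃ us, Forall₂ (· <:+: ·) us ws ∧ reduce ws.flatten = us.flatten := by
  induction ws using List.reverseRecOn with
  | nil => exact ⟨[], .nil, rfl⟩
  | append_singleton ws y ih =>
    obtain ⟨us, hus, hred⟩ := ih fun w hw => hws w (mem_append_left _ hw)
    have hy : IsReduced y := hws y (mem_append_right _ (mem_singleton_self y))
    have hus_red : IsReduced us.flatten := isReduced_iff_reduce_eq.2 (hred ▸ reduce.idem)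
    obtain ⟨x', y', hx', hy', he⟩ := hus_red.exists_reduce_append_eq hy
    obtain ⟨ps, hps, rfl⟩ := exists_forall₂_infix_flatten_eq_of_prefix hus hx'
    refine ⟨ps ++ [y'], rel_append hps (.cons hy'.isInfix .nil), ?_⟩
    rw [flatten_append, flatten_singleton, flatten_append, flatten_singleton,
      ← reduce_append_reduce_reduce, hred, hy.reduce_eq, he]

end FreeGroup

theorem HasCutVertex.anti {V : Type*} {G H : SimpleGraph V} (hle : G ≤ H) (h : HasCutVertex H) :
    HasCutVertex G := by
  rcases h with h | ⟨v, hv⟩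
  · exact Or.inl fun hc => h (hc.mono hle)
  · exact Or.inr ⟨v, fun hc => hv (hc.mono fun _ _ hab => hle hab)⟩

section Whitehead

variable {g : ℕ}

theorem whiteheadGraph_mono {x y : List (Letter g)} (h : x <:+: y) :
    whiteheadGraph g x ≤ whiteheadGraph g y :=
  fun _ _ huv => ⟨huv.1, huv.2.imp (·.trans h) (·.trans h)⟩

theorem whiteheadGraph_nil : whiteheadGraph g [] = ⊥ := by
  ext u v
  simp [whiteheadGraph]

theorem hasCutVertex_whiteheadGraph_nil : HasCutVertex (whiteheadGraph g []) := by
  refine Or.inl fun hc => ?_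
  rw [whiteheadGraph_nil, SimpleGraph.connected_bot_iff] at hc
  obtain ⟨hsub, ⟨a⟩⟩ := hc
  exact absurd (hsub.elim (a.1, true) (a.1, false)) (by simp)

theorem simpleLength_le_of_forall {w : List (Letter g)} {n : ℕ}
    (h : ∀ zs : List (List (Letter g)), zs.flatten = w →
      (∀ z ∈ zs, ¬ HasCutVertex (whiteheadGraph g z)) → zs.length ≤ n) :
    simpleLength g w ≤ n := by
  unfold simpleLength
  split_ifs
  · exact Nat.zero_le n
  · exact csSup_le' fun t ⟨zs, hlen, hflat, hz⟩ => hlen ▸ h zs hflat hz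

end Whitehead

theorem simpleLength_prod_le_general (g : ℕ) (m : ℕ)
    (ws : List (List (Letter g))) (hlen : ws.length = m)
    (hred : ∀ w ∈ ws, IsReducedWord w)
    (hcut : ∀ w ∈ ws, HasCutVertex (whiteheadGraph g w)) :
    simpleLength g (FreeGroup.reduce ws.flatten) ≤ m - 1 := by
  obtain ⟨us, hus, hreduce⟩ := FreeGroup.exists_forall₂_infix_reduce_flatten_eq fun w hw =>
    FreeGroup.isReduced_iff_reduce_eq.2 (hred w hw)
  refine simpleLength_le_of_forall fun zs hzs hz => ?_
  have hinf : ∀ z ∈ zs, ∀ u ∈ us, ¬ z <:+: u := fun z hz' u hu hzu => by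
    obtain ⟨w, hw, huw⟩ := hus.exists_mem_of_mem hu
    exact hz z hz' ((hcut w hw).anti (whiteheadGraph_mono (hzu.trans huw)))
  have hne : ∀ z ∈ zs, z ≠ [] := fun z hz' hnil =>
    hz z hz' (hnil ▸ hasCutVertex_whiteheadGraph_nil)
  have hcount := List.length_le_of_append_flatten_eq (r := [])
    (by rw [List.nil_append, hzs, hreduce]) hne hinf
  rwa [hus.length_eq, hlen] at hcount

/-- If `w_1, …, w_m` (`m ≥ 1`) are freely reduced words whose Whitehead graphs all have cut
vertices, then the unique reduced word `w` representing the product `w_1 w_2 ⋯ w_m` in `F_g`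
satisfies `|w|ₛ ≤ m - 1`. -/
theorem simpleLength_prod_le (g : ℕ) (hg : 2 ≤ g) (m : ℕ) (hm : 1 ≤ m)
    (ws : List (List (Letter g))) (hlen : ws.length = m)
    (hred : ∀ w ∈ ws, IsReducedWord w)
    (hcut : ∀ w ∈ ws, HasCutVertex (whiteheadGraph g w)) :
    simpleLength g (FreeGroup.reduce ws.flatten) ≤ m - 1 :=
  simpleLength_prod_le_general g m ws hlen hred hcut
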